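/- Let M be a standard Borel space, A_sat a sub-σ-algebra of its Borel σ-algebra, m a probability measure on M, and π : M → P(M) the conditional measure map x ↦ m_x. For any standard Borel space X and any Borel measurable map f : M → X that is A_sat-measurable, there exists a measurable map 𝔣 : P(M) → X such that f = 𝔣 ∘ π m-almost everywhere. -/

import Mathlib

/-!
Embed `X` measurably into `[0, 1] ⊆ ℝ` by some `ψ`. The real function `h = ψ ∘ f` is bounded and
`A_sat`-measurable, so it is its own conditional expectation: `∫ h ∂m_x = h x` for `m`-a.e. `x`.
Since `μ ↦ ∫ h ∂μ` is measurable on the space of measures, composing it with a measurable left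
inverse of `ψ` gives `𝔣`.
-/

open MeasureTheory ProbabilityTheory

theorem MeasureTheory.Measure.measurable_integral_of_nonneg {α : Type*} [MeasurableSpace α]
    {h : α → ℝ} (hm : Measurable h) (h_nonneg : 0 ≤ h) :
    Measurable fun μ : Measure α => ∫ x, h x ∂μ := by
  simp_rw [integral_eq_lintegral_of_nonneg_ae (.of_forall h_nonneg) hm.aestronglyMeasurable]
  exact (Measure.measurable_lintegral (ENNReal.measurable_ofReal.comp hm)).ennreal_toReal

namespace ProbabilityTheory

variable {Ω : Type*} {m : MeasurableSpace Ω} [mΩ : MeasurableSpace Ω] [StandardBorelSpace Ω]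
  {μ : Measure Ω} [IsFiniteMeasure μ]

theorem integral_condExpKernel_ae_eq_self {F : Type*} [NormedAddCommGroup F] [NormedSpace ℝ F]
    [CompleteSpace F] (hm : m ≤ mΩ) {f : Ω → F} (hf : StronglyMeasurable[m] f)
    (hf_int : Integrable f μ) :
    (fun ω => ∫ y, f y ∂condExpKernel μ m ω) =ᵐ[μ] f :=
  (condExp_ae_eq_integral_condExpKernel hm hf_int).symm.trans
    (condExp_of_stronglyMeasurable hm hf hf_int).eventuallyEq

theorem exists_measurable_comp_condExpKernel_ae_eq {X : Type*} [MeasurableSpace X]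
    [StandardBorelSpace X] [Nonempty X] (hm : m ≤ mΩ) {f : Ω → X} (hf : Measurable[m] f) :
    ∃ F : Measure Ω → X, Measurable F ∧ (fun ω => F (condExpKernel μ m ω)) =ᵐ[μ] f := by
  set ψ : X → ℝ := (↑) ∘ unitInterval.sigmoid ∘ embeddingReal X
  have hψ : MeasurableEmbedding ψ :=
    (MeasurableEmbedding.subtype_coe measurableSet_Icc).comp
      (measurableEmbedding_sigmoid_comp_embeddingReal X)
  obtain ⟨ψinv, hψinv, hψinv_comp⟩ := hψ.exists_measurable_extend measurable_id fun _ => ‹_›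
  have hψf : Measurable[m] (ψ ∘ f) := hψ.measurable.comp hf
  have hψf_int : Integrable (ψ ∘ f) μ :=
    .of_bound (hψf.mono hm le_rfl).aestronglyMeasurable 1 <| .of_forall fun _ =>
      (Real.norm_of_nonneg (unitInterval.nonneg _)).trans_le (unitInterval.le_one _)
  refine ⟨ψinv ∘ fun ν => ∫ y, ψ (f y) ∂ν,
    hψinv.comp (Measure.measurable_integral_of_nonneg (hψf.mono hm le_rfl)
      fun _ => unitInterval.nonneg _), ?_⟩
  filter_upwards [integral_condExpKernel_ae_eq_self hm hψf.stronglyMeasurable hψf_int] with ω hω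
  exact (congrArg ψinv hω).trans (congrFun hψinv_comp (f ω))

end ProbabilityTheory

theorem stmt1_general {M X : Type*} [mM : MeasurableSpace M] [StandardBorelSpace M]
    [MeasurableSpace X] [StandardBorelSpace X] [Nonempty X]
    (m : Measure M) [IsProbabilityMeasure m]
    (Asat : MeasurableSpace M) (hle : Asat ≤ mM)
    (f : M → X) (hf : Measurable[Asat] f) :
    ∃ F : @Measure M mM → X, Measurable F ∧
      (fun x => F (@Kernel.toFun M M Asat mM (@condExpKernel M mM _ m _ Asat) x)) =ᵐ[m] f :=
  exists_measurable_comp_condExpKernel_ae_eq (mΩ := mM) hle hf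

/-- Factorization through the conditional measure map: if `f : M → X` is `A_sat`-measurable
(with `X` standard Borel), then there is a measurable map `𝔣` on the space of probability
measures on `M` such that `f = 𝔣 ∘ π` `m`-a.e., where `π x = m_x` is the conditional measure. -/
theorem stmt1 {M X : Type*} [mM : MeasurableSpace M] [StandardBorelSpace M] [Nonempty M]
    [MeasurableSpace X] [StandardBorelSpace X] [Nonempty X]
    (m : Measure M) [IsProbabilityMeasure m]
    (Asat : MeasurableSpace M) (hle : Asat ≤ mM)
    (f : M → X) (hf : Measurable[Asat] f) :
    ∃ F : @Measure M mM → X, Measurable F ∧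
      (fun x => F (@Kernel.toFun M M Asat mM (@condExpKernel M mM _ m _ Asat) x)) =ᵐ[m] f :=
  stmt1_general (mM := mM) m Asat hle f hf
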